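/- Let X, Y, W be real Banach spaces and let L be a nonempty symmetric closed subset of S_X × S_{Y*} having property (P). Let (x,y*), (z,t*) ∈ L and let w*, v* be elements of the unit sphere of W*. If y*(T(x))·w*(e) = t*(T(z))·v*(e) for every finite-rank bounded linear operator T : X → Y and every e in the unit sphere of W, then (z,t*) = (x,y*) or (z,t*) = (−x,−y*). -/

import Mathlib

/-!
Testing the hypothesis on rank-one operators `f.smulRight y` and taking norms over the unit sphere
of `W` gives `|f x| |y* y| = |f z| |t* y|` for all `f ∈ X*`, `y ∈ Y`. Since all four vectors are
unit vectors, evaluating at a norming functional of `x` shows that `|y* y| = |t* y|` for every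
`y`, and then `|f x| = |f z|` for every `f`. The separating functionals of property (P) cannot
tell apart two such pairs, so their distance `dHG` vanishes.
-/

open Filter Topology Set

noncomputable section

variable {X Y : Type*}
  [NormedAddCommGroup X] [NormedSpace ℝ X]
  [NormedAddCommGroup Y] [NormedSpace ℝ Y]

/-- The Hausdorff distance between the symmetric pairs `Γ p = {p, -p}` and `Γ q = {q, -q}`
in `X × Y*` with the sum norm. -/
def dHG (p q : X × (Y →L[ℝ] ℝ)) : ℝ :=
  min (‖p.1 - q.1‖ + ‖p.2 - q.2‖) (‖p.1 + q.1‖ + ‖p.2 + q.2‖)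

/-- Property (P) for a subset `L ⊆ S_X × S_{Y*}`. -/
def PropP (L : Set (X × (Y →L[ℝ] ℝ))) : Prop :=
  ∃ ε₀ > (0 : ℝ), ∀ ε : ℝ, 0 < ε → ε < ε₀ → ∃ ϖ > (0 : ℝ), ∀ p ∈ L,
    ∃ (xs : X →L[ℝ] ℝ) (ye : Y), ‖xs‖ ≤ 1 ∧ ‖ye‖ ≤ 1 ∧
      ∀ q ∈ L, ε ≤ dHG p q → |xs q.1| + |q.2 ye| ≤ xs p.1 + p.2 ye - ϖ

/-- A finite-rank continuous linear operator. -/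
def FinRank {W : Type*} [NormedAddCommGroup W] [NormedSpace ℝ W] (T : X →L[ℝ] W) : Prop :=
  FiniteDimensional ℝ ↥(LinearMap.range T.toLinearMap)

theorem abs_eq_abs_of_mul_eq_on_sphere {W : Type*} [NormedAddCommGroup W] [NormedSpace ℝ W]
    {a b : ℝ} {f g : W →L[ℝ] ℝ} (hf : ‖f‖ = 1) (hg : ‖g‖ = 1)
    (h : ∀ e : W, ‖e‖ = 1 → a * f e = b * g e) : |a| = |b| := by
  have hnorm : ‖a • f‖ = ‖b • g‖ := by
    rw [← (a • f).sSup_sphere_eq_norm, ← (b • g).sSup_sphere_eq_norm]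
    congr 1
    refine Set.image_congr fun e he => ?_
    simp [h e (mem_sphere_zero_iff_norm.1 he)]
  simpa [norm_smul, hf, hg] using hnorm

theorem finRank_smulRight (f : X →L[ℝ] ℝ) (y : Y) : FinRank (f.smulRight y) := by
  refine Submodule.finiteDimensional_of_le (S₂ := Submodule.span ℝ {y}) ?_
  rintro _ ⟨x, rfl⟩
  exact Submodule.smul_mem _ _ (Submodule.mem_span_singleton_self y)

theorem abs_apply_eq_of_abs_tensor_eq {x z : X} {φ ψ : Y →L[ℝ] ℝ}
    (hx : ‖x‖ = 1) (hz : ‖z‖ ≤ 1) (hφ : ‖φ‖ = 1) (hψ : ‖ψ‖ ≤ 1)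
    (h : ∀ (f : X →L[ℝ] ℝ) (y : Y), |f x| * |φ y| = |f z| * |ψ y|) :
    (∀ f : X →L[ℝ] ℝ, |f x| = |f z|) ∧ ∀ y, |φ y| = |ψ y| := by
  obtain ⟨g, hg, hgx⟩ := exists_dual_vector'' ℝ x
  have hφg : ∀ y, |φ y| = |g z| * |ψ y| := by simpa [hgx, hx] using h g
  have hgz_le : |g z| ≤ 1 :=
    calc |g z| = ‖g z‖ := (Real.norm_eq_abs _).symm
      _ ≤ ‖g‖ * ‖z‖ := g.le_opNorm z
      _ ≤ 1 := mul_le_one₀ hg (norm_nonneg _) hz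
  have hgz_ge : 1 ≤ |g z| := hφ ▸ φ.opNorm_le_bound (abs_nonneg _) fun y =>
    calc ‖φ y‖ = |g z| * ‖ψ y‖ := hφg y
      _ ≤ |g z| * ‖y‖ := by
        gcongr
        exact ψ.le_of_opNorm_le hψ y |>.trans_eq (one_mul _)
  have hφψ : ∀ y, |φ y| = |ψ y| := fun y => by
    rw [hφg, le_antisymm hgz_le hgz_ge, one_mul]
  obtain ⟨y₀, hy₀⟩ : ∃ y₀, φ y₀ ≠ 0 := by
    by_contra! hzero
    exact one_ne_zero (hφ ▸ norm_eq_zero.2 (ContinuousLinearMap.ext hzero))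
  refine ⟨fun f => mul_right_cancel₀ (abs_ne_zero.2 hy₀) ?_, hφψ⟩
  rw [h f y₀, hφψ]

theorem eq_or_eq_neg_of_dHG_nonpos {E F : Type*} [NormedAddCommGroup E] [NormedAddCommGroup F]
    [NormedSpace ℝ F] {p q : E × (F →L[ℝ] ℝ)} (h : dHG p q ≤ 0) :
    q = p ∨ q = -p := by
  rcases min_le_iff.1 h with h | h
  · obtain ⟨h1, h2⟩ := (add_eq_zero_iff_of_nonneg (norm_nonneg _) (norm_nonneg _)).1
      (le_antisymm h (by positivity))
    exact .inl (Prod.ext (sub_eq_zero.1 (norm_eq_zero.1 h1)).symm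
      (sub_eq_zero.1 (norm_eq_zero.1 h2)).symm)
  · obtain ⟨h1, h2⟩ := (add_eq_zero_iff_of_nonneg (norm_nonneg _) (norm_nonneg _)).1
      (le_antisymm h (by positivity))
    exact .inr (Prod.ext (eq_neg_of_add_eq_zero_right (norm_eq_zero.1 h1))
      (eq_neg_of_add_eq_zero_right (norm_eq_zero.1 h2)))

theorem PropP.dHG_nonpos {L : Set (X × (Y →L[ℝ] ℝ))} (hP : PropP L) {p q : X × (Y →L[ℝ] ℝ)}
    (hp : p ∈ L) (hq : q ∈ L) (h1 : ∀ f : X →L[ℝ] ℝ, |f p.1| = |f q.1|)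
    (h2 : ∀ y, |p.2 y| = |q.2 y|) : dHG p q ≤ 0 := by
  by_contra! hd
  obtain ⟨ε₀, hε₀, hP⟩ := hP
  obtain ⟨ϖ, hϖ, hsep⟩ := hP (min (ε₀ / 2) (dHG p q)) (lt_min (half_pos hε₀) hd)
    ((min_le_left _ _).trans_lt (half_lt_self hε₀))
  obtain ⟨xs, ye, -, -, hxs⟩ := hsep p hp
  have hsep_q := hxs q hq (min_le_right _ _)
  rw [← h1, ← h2] at hsep_q
  linarith [le_abs_self (xs p.1), le_abs_self (p.2 ye)]

theorem statement11_general {W : Type*} [NormedAddCommGroup W] [NormedSpace ℝ W]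
    (L : Set (X × (Y →L[ℝ] ℝ)))
    (hLsphere : ∀ p ∈ L, ‖p.1‖ = 1 ∧ ‖p.2‖ = 1)
    (hP : PropP L)
    (p q : X × (Y →L[ℝ] ℝ)) (hp : p ∈ L) (hq : q ∈ L)
    (ws vs : W →L[ℝ] ℝ) (hws : ‖ws‖ = 1) (hvs : ‖vs‖ = 1)
    (h : ∀ T : X →L[ℝ] Y, FinRank T → ∀ e : W, ‖e‖ = 1 →
      p.2 (T p.1) * ws e = q.2 (T q.1) * vs e) :
    q = p ∨ q = -p := by
  obtain ⟨hp1, hp2⟩ := hLsphere p hp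
  obtain ⟨hq1, hq2⟩ := hLsphere q hq
  have htensor : ∀ (f : X →L[ℝ] ℝ) (y : Y), |f p.1| * |p.2 y| = |f q.1| * |q.2 y| := fun f y => by
    simpa [abs_mul] using abs_eq_abs_of_mul_eq_on_sphere hws hvs (h _ (finRank_smulRight f y))
  obtain ⟨h1, h2⟩ := abs_apply_eq_of_abs_tensor_eq hp1 hq1.le hp2 hq2.le htensor
  exact eq_or_eq_neg_of_dHG_nonpos (hP.dHG_nonpos hp hq h1 h2)

theorem statement11 {W : Type*} [NormedAddCommGroup W] [NormedSpace ℝ W]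
    [CompleteSpace X] [CompleteSpace Y] [CompleteSpace W]
    (L : Set (X × (Y →L[ℝ] ℝ))) (hLne : L.Nonempty)
    (hLsphere : ∀ p ∈ L, ‖p.1‖ = 1 ∧ ‖p.2‖ = 1)
    (hLsym : ∀ p ∈ L, -p ∈ L) (hLclosed : IsClosed L)
    (hP : PropP L)
    (p q : X × (Y →L[ℝ] ℝ)) (hp : p ∈ L) (hq : q ∈ L)
    (ws vs : W →L[ℝ] ℝ) (hws : ‖ws‖ = 1) (hvs : ‖vs‖ = 1)
    (h : ∀ T : X →L[ℝ] Y, FinRank T → ∀ e : W, ‖e‖ = 1 →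
      p.2 (T p.1) * ws e = q.2 (T q.1) * vs e) :
    q = p ∨ q = -p :=
  statement11_general L hLsphere hP p q hp hq ws vs hws hvs h

end
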